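/- arXiv:1005.1373 — 3 statements merged into one kernel-verified Lean document; each statement's English description precedes it below -/
import Mathlib

section
/- Let T be a semistandard tableau of shape λ that is not the highest weight tableau T_λ (the tableau whose i-th row is filled with i's). Define i_T = min{ a^T_{i,j} − 1 : a^T_{i,j} > i }. Then the number of minus signs remaining after cancellation in the i_T-signature of T (equivalently, ε_{i_T}(T) in the crystal structure via the Middle-Eastern reading) equals the number of boxes (i,j) with a^T_{i,j} > i and a^T_{i,j} − 1 = i_T. -/
/-- A Young diagram shape: `s` rows (0-indexed), `lam i` = length of row `i`. -/
structure Shape where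
  s : ℕ
  lam : ℕ → ℕ
  pos : ∀ i < s, 0 < lam i
  anti : ∀ i j, i ≤ j → j < s → lam j ≤ lam i

/-- `T i j` = entry in the `j`-th box (0-indexed) of the `i`-th row (0-indexed);
entries lie in `{1, …, n+1}`, rows weakly increase, columns strictly increase. -/
structure IsSSYT (n : ℕ) (sh : Shape) (T : ℕ → ℕ → ℕ) : Prop where
  entries : ∀ i < sh.s, ∀ j < sh.lam i, 1 ≤ T i j ∧ T i j ≤ n + 1
  rows : ∀ i < sh.s, ∀ j j', j ≤ j' → j' < sh.lam i → T i j ≤ T i j'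
  cols : ∀ i, i + 1 < sh.s → ∀ j < sh.lam (i + 1), T i j < T (i + 1) j

/-- `Psi sh T k j` = `μ^{(k)}_j` = (the `(j+1)`-th entry from the right in row `k`) minus
the (1-based) row number `k+1`. -/
def Psi (sh : Shape) (T : ℕ → ℕ → ℕ) (k j : ℕ) : ℤ :=
  (T k (sh.lam k - 1 - j) : ℤ) - (k + 1)


/-- Row `i` read right to left. -/
def rowWord (sh : Shape) (T : ℕ → ℕ → ℕ) (i : ℕ) : List ℕ :=
  (List.range (sh.lam i)).reverse.map (T i)

/-- Middle-Eastern reading: rows right to left, top to bottom. -/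
def meWord (sh : Shape) (T : ℕ → ℕ → ℕ) : List ℕ :=
  ((List.range sh.s).map (rowWord sh T)).flatten

/-- Column `j` read top to bottom. -/
def colWord (sh : Shape) (T : ℕ → ℕ → ℕ) (j : ℕ) : List ℕ :=
  ((List.range sh.s).filter (fun i => j < sh.lam i)).map (fun i => T i j)

/-- Far-Eastern reading: columns top to bottom, right to left. -/
def feWord (sh : Shape) (T : ℕ → ℕ → ℕ) : List ℕ :=
  ((List.range (if sh.s = 0 then 0 else sh.lam 0)).reverse.map (colWord sh T)).flatten

/-- `ε_i` of a word in letters `{1,…,n+1}` (tensor product rule): the number of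
uncancelled `−`'s, i.e. the maximum over prefixes of `#(i+1) − #(i)` (and `0`). -/
def epsWord (i : ℕ) (w : List ℕ) : ℤ :=
  ((List.range (w.length + 1)).map
    (fun k => ((w.take k).count (i + 1) : ℤ) - ((w.take k).count i : ℤ))).foldr max 0

/-- `φ_i` of a word: the number of uncancelled `+`'s, i.e. the maximum over suffixes of
`#(i) − #(i+1)` (and `0`). -/
def phiWord (i : ℕ) (w : List ℕ) : ℤ :=
  ((List.range (w.length + 1)).map
    (fun k => ((w.drop k).count i : ℤ) - ((w.drop k).count (i + 1) : ℤ))).foldr max 0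

/-- Position (plus one) of the rightmost uncancelled `−`: the largest `k` such that the
prefix of length `k` realizes `ε_i`. -/
def ePos (i : ℕ) (w : List ℕ) : ℕ :=
  ((List.range (w.length + 1)).filter
    (fun k => ((w.take k).count (i + 1) : ℤ) - ((w.take k).count i : ℤ) = epsWord i w)).foldr max 0

/-- Kashiwara raising operator on words: change the `i+1` at the rightmost uncancelled `−`
into an `i` (identity when `ε_i = 0`). -/
def eWord (i : ℕ) (w : List ℕ) : List ℕ :=
  if epsWord i w ≤ 0 then w else w.set (ePos i w - 1) i

/-- Position of the leftmost uncancelled `+`: the smallest `k` such that the suffix starting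
at `k` realizes `φ_i`. -/
def fPos (i : ℕ) (w : List ℕ) : ℕ :=
  ((List.range (w.length + 1)).filter
    (fun k => ((w.drop k).count i : ℤ) - ((w.drop k).count (i + 1) : ℤ) = phiWord i w)).foldr min w.length

/-- Kashiwara lowering operator on words: change the `i` at the leftmost uncancelled `+`
into an `i+1` (identity when `φ_i = 0`). -/
def fWord (i : ℕ) (w : List ℕ) : List ℕ :=
  if phiWord i w ≤ 0 then w else w.set (fPos i w) (i + 1)

/-! Entries equal to `i_T` can only lie in row `i_T` (rows counted from 1), where, the row being
weakly increasing, they are read last; so in the reading word of the first `i_T` rows no `i_T`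
precedes an `i_T + 1`, and every `-` of the `i_T`-signature survives there. The remaining rows
contain no `i_T`, and their letters `i_T + 1` all lie in row `i_T + 1`, each directly below an
`i_T` of row `i_T`: they are cancelled by those `+`. Hence `ε_{i_T}(T)` is the number of letters
`i_T + 1` in the first `i_T` rows, which are exactly the boxes counted on the right. -/

def excess (i : ℕ) (w : List ℕ) : ℤ := (w.count (i + 1) : ℤ) - w.count i

lemma excess_append (i : ℕ) (u w : List ℕ) : excess i (u ++ w) = excess i u + excess i w := by
  simp only [excess, List.count_append]; push_cast; ring

lemma foldr_max_zero_le_iff {l : List ℤ} {b : ℤ} :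
    l.foldr max 0 ≤ b ↔ 0 ≤ b ∧ ∀ x ∈ l, x ≤ b := by
  induction l with
  | nil => simp
  | cons a l ih => simp only [List.foldr_cons, max_le_iff, ih, List.forall_mem_cons]; tauto

lemma epsWord_le_iff {i : ℕ} {w : List ℕ} {b : ℤ} :
    epsWord i w ≤ b ↔ 0 ≤ b ∧ ∀ k ≤ w.length, excess i (w.take k) ≤ b := by
  simp [epsWord, foldr_max_zero_le_iff, excess]

lemma epsWord_append (i : ℕ) (u w : List ℕ) :
    epsWord i (u ++ w) = max (epsWord i u) (excess i u + epsWord i w) := by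
  refine eq_of_forall_ge_iff fun b => ?_
  rw [max_le_iff, ← le_sub_iff_add_le', epsWord_le_iff, epsWord_le_iff, epsWord_le_iff,
    List.length_append]
  constructor
  · rintro ⟨hb, h⟩
    refine ⟨⟨hb, fun k hk => ?_⟩, ?_, fun k hk => ?_⟩
    · simpa [List.take_append_of_le_length hk] using h k (by omega)
    · simpa using h u.length (by omega)
    · have := h (u.length + k) (by omega)
      rw [List.take_length_add_append, excess_append] at this
      linarith
  · rintro ⟨⟨hb, hu⟩, -, hw⟩
    refine ⟨hb, fun k hk => ?_⟩
    rcases le_or_gt k u.length with hku | hku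
    · rw [List.take_append_of_le_length hku]
      exact hu k hku
    · obtain ⟨k, rfl⟩ := Nat.exists_eq_add_of_le hku.le
      rw [List.take_length_add_append, excess_append]
      linarith [hw k (by omega)]

lemma epsWord_singleton (i a : ℕ) : epsWord i [a] = if a = i + 1 then 1 else 0 := by
  split_ifs with h <;> simp [epsWord, List.range_succ, h]

/-- If no `i` precedes an `i + 1`, every `-` of the `i`-signature survives the cancellation. -/
lemma epsWord_eq_count_of_pairwise {i : ℕ} {w : List ℕ}
    (hw : w.Pairwise fun a b => a = i → b ≠ i + 1) : epsWord i w = w.count (i + 1) := by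
  induction w with
  | nil => simp [epsWord]
  | cons a w ih =>
    rw [List.pairwise_cons] at hw
    rw [← List.singleton_append, epsWord_append, ih hw.2, epsWord_singleton, excess,
      List.count_append]
    by_cases hai : a = i
    · have : w.count (i + 1) = 0 := List.count_eq_zero.2 fun hmem => hw.1 _ hmem hai rfl
      simp [hai, this]
    · by_cases hai' : a = i + 1 <;> simp [hai, hai']

lemma epsWord_append_eq_count {i : ℕ} {u z : List ℕ}
    (hu : u.Pairwise fun a b => a = i → b ≠ i + 1) (hz : z.count i = 0)
    (hzu : z.count (i + 1) ≤ u.count i) : epsWord i (u ++ z) = u.count (i + 1) := by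
  have hz' : z.Pairwise fun a b => a = i → b ≠ i + 1 :=
    List.pairwise_of_forall_mem_list fun a ha _ _ h => (List.count_eq_zero.1 hz (h ▸ ha)).elim
  rw [epsWord_append, epsWord_eq_count_of_pairwise hu, epsWord_eq_count_of_pairwise hz', excess]
  exact max_eq_left (by omega)

lemma count_rowWord (sh : Shape) (T : ℕ → ℕ → ℕ) (q a : ℕ) :
    (rowWord sh T q).count a = ((Finset.range (sh.lam q)).filter fun j => T q j = a).card := by
  rw [rowWord, List.map_reverse, List.count_reverse, List.count_eq_countP, List.countP_map]
  simp [Finset.card, Finset.range_val, Multiset.range, List.countP_eq_length_filter,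
    beq_eq_decide, Function.comp_def]

def topRowsWord (sh : Shape) (T : ℕ → ℕ → ℕ) (k : ℕ) : List ℕ :=
  (((List.range sh.s).map (rowWord sh T)).take k).flatten

def bottomRowsWord (sh : Shape) (T : ℕ → ℕ → ℕ) (k : ℕ) : List ℕ :=
  (((List.range sh.s).map (rowWord sh T)).drop k).flatten

lemma meWord_eq_topRowsWord_append (sh : Shape) (T : ℕ → ℕ → ℕ) (k : ℕ) :
    meWord sh T = topRowsWord sh T k ++ bottomRowsWord sh T k := by
  rw [topRowsWord, bottomRowsWord, ← List.flatten_append, List.take_append_drop, meWord]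

lemma mem_take_rows {sh : Shape} {T : ℕ → ℕ → ℕ} {k : ℕ} {r : List ℕ}
    (hr : r ∈ ((List.range sh.s).map (rowWord sh T)).take k) :
    ∃ q < sh.s, q < k ∧ r = rowWord sh T q := by
  rw [← List.map_take, List.take_range] at hr
  obtain ⟨q, hq, rfl⟩ := List.mem_map.1 hr
  rw [List.mem_range] at hq
  exact ⟨q, by omega, by omega, rfl⟩

lemma mem_drop_rows {sh : Shape} {T : ℕ → ℕ → ℕ} {k : ℕ} {r : List ℕ}
    (hr : r ∈ ((List.range sh.s).map (rowWord sh T)).drop k) :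
    ∃ q < sh.s, k ≤ q ∧ r = rowWord sh T q := by
  obtain ⟨q, hq, rfl⟩ := List.mem_drop_iff_getElem.1 hr
  simp only [List.length_map, List.length_range] at hq
  exact ⟨k + q, by omega, by omega, by simp⟩

lemma count_bottomRowsWord_eq_zero {sh : Shape} {T : ℕ → ℕ → ℕ} {k a : ℕ}
    (h : ∀ q < sh.s, k ≤ q → (rowWord sh T q).count a = 0) :
    (bottomRowsWord sh T k).count a = 0 := by
  rw [bottomRowsWord, List.count_flatten]
  refine List.sum_eq_zero fun c hc => ?_
  obtain ⟨r, hr, rfl⟩ := List.mem_map.1 hc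
  obtain ⟨q, hq, hkq, rfl⟩ := mem_drop_rows hr
  exact h q hq hkq

lemma count_topRowsWord (sh : Shape) (T : ℕ → ℕ → ℕ) (k a : ℕ) :
    (topRowsWord sh T k).count a =
      ∑ q ∈ (Finset.range sh.s).filter (· < k), (rowWord sh T q).count a := by
  have hrange : (Finset.range sh.s).filter (· < k) = Finset.range (min k sh.s) := by
    ext q; simp; omega
  rw [topRowsWord, hrange, ← List.map_take, List.take_range, List.count_flatten, List.map_map]
  rfl

lemma card_filter_lt_and_sub_one_eq (sh : Shape) (T : ℕ → ℕ → ℕ) (q k : ℕ) :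
    ((Finset.range (sh.lam q)).filter fun j => q + 1 < T q j ∧ T q j - 1 = k).card =
      if q < k then (rowWord sh T q).count (k + 1) else 0 := by
  rw [count_rowWord]
  split_ifs with hqk
  · congr 1
    exact Finset.filter_congr fun j _ => by omega
  · rw [Finset.card_eq_zero, Finset.filter_eq_empty_iff]
    omega

namespace IsSSYT

variable {n : ℕ} {sh : Shape} {T : ℕ → ℕ → ℕ} {k : ℕ}

lemma row_lt_entry (hT : IsSSYT n sh T) {q j : ℕ} (hq : q < sh.s) (hj : j < sh.lam q) :
    q < T q j := by
  induction q generalizing j with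
  | zero => exact (hT.entries 0 hq j hj).1
  | succ q ih =>
    have := ih (by omega) (hj.trans_le (sh.anti q (q + 1) (by omega) hq))
    have := hT.cols q hq j hj
    omega

lemma pairwise_rowWord (hT : IsSSYT n sh T) {q : ℕ} (hq : q < sh.s) :
    (rowWord sh T q).Pairwise (· ≥ ·) := by
  rw [rowWord, List.pairwise_map, List.pairwise_reverse]
  exact List.pairwise_lt_range.imp_of_mem fun ha hb hab =>
    hT.rows q hq _ _ hab.le (List.mem_range.1 hb)

lemma count_rowWord_eq_zero_of_le (hT : IsSSYT n sh T) {q a : ℕ} (hq : q < sh.s) (ha : a ≤ q) :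
    (rowWord sh T q).count a = 0 := by
  rw [count_rowWord, Finset.card_eq_zero, Finset.filter_eq_empty_iff]
  intro j hj
  have := hT.row_lt_entry hq (Finset.mem_range.1 hj)
  omega

/-- Each `q + 2` in row `q + 1` sits below a `q + 1` in row `q`. -/
lemma count_rowWord_succ_le (hT : IsSSYT n sh T) {q : ℕ} (hq : q + 1 < sh.s) :
    (rowWord sh T (q + 1)).count (q + 2) ≤ (rowWord sh T q).count (q + 1) := by
  rw [count_rowWord, count_rowWord]
  refine Finset.card_le_card fun j hj => ?_
  simp only [Finset.mem_filter, Finset.mem_range] at hj ⊢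
  have hjq : j < sh.lam q := hj.1.trans_le (sh.anti q (q + 1) (by omega) hq)
  have := hT.cols q hq j hj.1
  have := hT.row_lt_entry (by omega : q < sh.s) hjq
  omega

lemma count_bottomRowsWord_le (hT : IsSSYT n sh T) (hk : 0 < k) :
    (bottomRowsWord sh T k).count (k + 1) ≤ (topRowsWord sh T k).count k := by
  obtain ⟨q, rfl⟩ : ∃ q, k = q + 1 := ⟨k - 1, by omega⟩
  rcases lt_or_ge (q + 1) sh.s with hqs | hqs
  · have hsplit : bottomRowsWord sh T (q + 1) =
        rowWord sh T (q + 1) ++ bottomRowsWord sh T (q + 2) := by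
      rw [bottomRowsWord, List.drop_eq_getElem_cons (by simpa), List.flatten_cons]
      simp [bottomRowsWord]
    have hrest : (bottomRowsWord sh T (q + 2)).count (q + 2) = 0 :=
      count_bottomRowsWord_eq_zero fun p hp hqp => hT.count_rowWord_eq_zero_of_le hp hqp
    have hrow : rowWord sh T q ∈ ((List.range sh.s).map (rowWord sh T)).take (q + 1) := by
      rw [← List.map_take, List.take_range]
      exact List.mem_map.2 ⟨q, List.mem_range.2 (by omega), rfl⟩
    calc (bottomRowsWord sh T (q + 1)).count (q + 1 + 1)
        = (rowWord sh T (q + 1)).count (q + 2) := by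
          rw [hsplit, List.count_append, hrest, add_zero]
      _ ≤ (rowWord sh T q).count (q + 1) := hT.count_rowWord_succ_le hqs
      _ ≤ (topRowsWord sh T (q + 1)).count (q + 1) :=
          (List.sublist_flatten_of_mem hrow).count_le _
  · rw [count_bottomRowsWord_eq_zero fun p hp hqp => by omega]
    exact Nat.zero_le _

lemma succ_eq_of_entry_eq (hT : IsSSYT n sh T)
    (hmin : ∀ q < sh.s, ∀ j < sh.lam q, q + 1 < T q j → k < T q j)
    {q j : ℕ} (hq : q < sh.s) (hj : j < sh.lam q) (hqj : T q j = k) : q + 1 = k := by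
  have := hT.row_lt_entry hq hj
  have := hmin q hq j hj
  omega

lemma pairwise_topRowsWord (hT : IsSSYT n sh T)
    (hmin : ∀ q < sh.s, ∀ j < sh.lam q, q + 1 < T q j → k < T q j) :
    (topRowsWord sh T k).Pairwise fun a b => a = k → b ≠ k + 1 := by
  rw [topRowsWord, List.pairwise_flatten]
  constructor
  · intro r hr
    obtain ⟨q, hq, -, rfl⟩ := mem_take_rows hr
    exact (hT.pairwise_rowWord hq).imp fun hab ha hb => by omega
  · rw [← List.map_take, List.take_range, List.pairwise_map]
    refine List.pairwise_lt_range.imp_of_mem fun {q q'} _ hq' hqq' x hx y _ hxk => ?_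
    simp only [rowWord, List.mem_map, List.mem_reverse, List.mem_range] at hx
    obtain ⟨j, hj, hTj⟩ := hx
    rw [List.mem_range] at hq'
    have := hT.succ_eq_of_entry_eq hmin (by omega) hj (hTj.trans hxk)
    omega

lemma count_bottomRowsWord_self (hT : IsSSYT n sh T)
    (hmin : ∀ q < sh.s, ∀ j < sh.lam q, q + 1 < T q j → k < T q j) :
    (bottomRowsWord sh T k).count k = 0 := by
  refine count_bottomRowsWord_eq_zero fun q hq hkq => ?_
  rw [count_rowWord, Finset.card_eq_zero, Finset.filter_eq_empty_iff]
  intro j hj hTj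
  have := hT.succ_eq_of_entry_eq hmin hq (Finset.mem_range.1 hj) hTj
  omega

end IsSSYT

/-- If `T` is a semistandard tableau of shape `λ` which is not the highest
weight tableau, and `i_T = min { a^T_{i,j} − 1 : a^T_{i,j} > i }`, then `ε_{i_T}(T)`
(computed via the Middle-Eastern reading) equals the number of boxes `(i,j)` with
`a^T_{i,j} > i` and `a^T_{i,j} − 1 = i_T`.  (Rows are 0-indexed, so the 1-based row
number of row `i` is `i+1`.) -/
theorem eps_iT_eq_card (n : ℕ) (sh : Shape) (T : ℕ → ℕ → ℕ) (hT : IsSSYT n sh T)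
    (iT : ℕ)
    (hiT : IsLeast {v | ∃ i < sh.s, ∃ j < sh.lam i, i + 1 < T i j ∧ v = T i j - 1} iT) :
    epsWord iT (meWord sh T) =
      ∑ i ∈ Finset.range sh.s,
        (((Finset.range (sh.lam i)).filter
            (fun j => i + 1 < T i j ∧ T i j - 1 = iT)).card : ℤ) := by
  obtain ⟨⟨i, hi, j, hj, hij, hiT_eq⟩, hlow⟩ := hiT
  have hpos : 0 < iT := by omega
  have hmin : ∀ q < sh.s, ∀ j' < sh.lam q, q + 1 < T q j' → iT < T q j' :=
    fun q hq j' hj' h => by have := hlow ⟨q, hq, j', hj', h, rfl⟩; omega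
  rw [meWord_eq_topRowsWord_append sh T iT,
    epsWord_append_eq_count (hT.pairwise_topRowsWord hmin) (hT.count_bottomRowsWord_self hmin)
      (hT.count_bottomRowsWord_le hpos),
    count_topRowsWord, Finset.sum_filter]
  push_cast
  exact Finset.sum_congr rfl fun q _ => by
    rw [card_filter_lt_and_sub_one_eq]; split_ifs <;> simp
end

section
/- Let M be a finite dimensional graded R(α)-module over the KLR algebra of type A_n, and suppose the sequence i ∈ I^α contains m consecutive equal entries i, i.e., i = (…, i,…,i (m times), …). If dim(1_i M) > 0, then dim(1_i M) ≥ m!. -/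
open scoped BigOperators

/-- A word of length `d` in the index set `I = {1,…,n}` (encoded 0-based as `Fin n`). -/
abbrev Word (n d : ℕ) := Fin d → Fin n

/-- The content of a word: the element of `Q⁺` it represents. -/
def wContent {n d : ℕ} (w : Word n d) : Fin n → ℕ :=
  fun i => (Finset.univ.filter fun k => w k = i).card

/-- Entries of the type `A_n` Cartan matrix, on the 0-based indices. -/
def cartanA (a b : ℕ) : ℤ :=
  if a = b then 2 else if a + 1 = b ∨ b + 1 = a then -1 else 0

/-- Generators of the KLR algebra `R(α)` of type `A_n`: idempotents `1_w`, dots `x_k`,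
crossings `τ_s` (the crossing `τ_s` acts on strands `s, s+1`, 0-based). -/
inductive KLRGen (n d : ℕ) : Type
  | e : Word n d → KLRGen n d
  | x : Fin d → KLRGen n d
  | t : Fin (d - 1) → KLRGen n d

abbrev KLRFree (n d : ℕ) := FreeAlgebra ℂ (KLRGen n d)

def ge {n d : ℕ} (w : Word n d) : KLRFree n d := FreeAlgebra.ι ℂ (KLRGen.e w)
def gx {n d : ℕ} (k : Fin d) : KLRFree n d := FreeAlgebra.ι ℂ (KLRGen.x k)
def gt {n d : ℕ} (s : Fin (d - 1)) : KLRFree n d := FreeAlgebra.ι ℂ (KLRGen.t s)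

/-- The left strand of the crossing `τ_s`. -/
def posl {d : ℕ} (s : Fin (d - 1)) : Fin d := ⟨s.1, by have := s.isLt; omega⟩
/-- The right strand of the crossing `τ_s`. -/
def posr {d : ℕ} (s : Fin (d - 1)) : Fin d := ⟨s.1 + 1, by have := s.isLt; omega⟩

/-- The word with the entries at positions `s, s+1` exchanged. -/
def wswap {n d : ℕ} (s : Fin (d - 1)) (w : Word n d) : Word n d :=
  w ∘ Equiv.swap (posl s) (posr s)

/-- The defining relations of the KLR algebra `R(α)` of type `A_n`. -/
inductive KLRRel (n d : ℕ) (α : Fin n → ℕ) : KLRFree n d → KLRFree n d → Prop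
  | unit : KLRRel n d α
      (∑ w ∈ Finset.univ.filter (fun w : Word n d => wContent w = α), ge w) 1
  | offblock (w : Word n d) : wContent w ≠ α → KLRRel n d α (ge w) 0
  | orth (w w' : Word n d) : w ≠ w' → KLRRel n d α (ge w * ge w') 0
  | idem (w : Word n d) : KLRRel n d α (ge w * ge w) (ge w)
  | xe (k : Fin d) (w : Word n d) : KLRRel n d α (gx k * ge w) (ge w * gx k)
  | te (s : Fin (d - 1)) (w : Word n d) :
      KLRRel n d α (gt s * ge w) (ge (wswap s w) * gt s)
  | xx (k l : Fin d) : KLRRel n d α (gx k * gx l) (gx l * gx k)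
  | ttfar (s s' : Fin (d - 1)) : s.1 + 1 < s'.1 ∨ s'.1 + 1 < s.1 →
      KLRRel n d α (gt s * gt s') (gt s' * gt s)
  | tsq (s : Fin (d - 1)) (w : Word n d) :
      KLRRel n d α (gt s * gt s * ge w)
        (if w (posl s) = w (posr s) then 0
         else if cartanA (w (posl s)).1 (w (posr s)).1 = 0 then ge w
         else (gx (posl s) + gx (posr s)) * ge w)
  | braid (s s' : Fin (d - 1)) (h : s'.1 = s.1 + 1) (w : Word n d) :
      KLRRel n d α ((gt s * gt s' * gt s - gt s' * gt s * gt s') * ge w)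
        (if w (posl s) = w (posr s') ∧ cartanA (w (posl s)).1 (w (posr s)).1 = -1
         then ge w else 0)
  | txk (s : Fin (d - 1)) (k : Fin d) (w : Word n d) :
      KLRRel n d α ((gt s * gx k - gx (Equiv.swap (posl s) (posr s) k) * gt s) * ge w)
        (if k = posl s ∧ w (posl s) = w (posr s) then ge w
         else if k = posr s ∧ w (posl s) = w (posr s) then -(ge w) else 0)

/-- The Khovanov–Lauda–Rouquier algebra `R(α)` of type `A_n`, for `α ∈ Q⁺` of height `d`. -/
abbrev KLR (n d : ℕ) (α : Fin n → ℕ) := RingQuot (KLRRel n d α)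

/-- The idempotent `1_w ∈ R(α)`. -/
noncomputable def Ew {n d : ℕ} (α : Fin n → ℕ) (w : Word n d) : KLR n d α :=
  RingQuot.mkAlgHom ℂ (KLRRel n d α) (ge w)
/-- The dot `x_k ∈ R(α)`. -/
noncomputable def Xg {n d : ℕ} (α : Fin n → ℕ) (k : Fin d) : KLR n d α :=
  RingQuot.mkAlgHom ℂ (KLRRel n d α) (gx k)
/-- The crossing `τ_s ∈ R(α)`. -/
noncomputable def Tg {n d : ℕ} (α : Fin n → ℕ) (s : Fin (d - 1)) : KLR n d α :=
  RingQuot.mkAlgHom ℂ (KLRRel n d α) (gt s)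

/-- A grading on an `R(α)`-module `M`, making it a graded module: a direct sum decomposition
into `ℂ`-subspaces such that the `1_w` preserve degrees, the dots raise degrees by `2` and
the crossings `τ_s 1_w` shift degrees by `−a_{w_s, w_{s+1}}`. -/
structure KLRGrading (n d : ℕ) (α : Fin n → ℕ) (M : Type*) [AddCommGroup M] [Module ℂ M]
    [Module (KLR n d α) M] : Type _ where
  piece : ℤ → Submodule ℂ M
  internal : DirectSum.IsInternal piece
  e_stable : ∀ (w : Word n d) (i : ℤ), ∀ m ∈ piece i, Ew α w • m ∈ piece i
  x_shift : ∀ (k : Fin d) (i : ℤ), ∀ m ∈ piece i, Xg α k • m ∈ piece (i + 2)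
  t_shift : ∀ (s : Fin (d - 1)) (w : Word n d) (i : ℤ), ∀ m ∈ piece i,
      (Tg α s * Ew α w) • m ∈ piece (i - cartanA (w (posl s)).1 (w (posr s)).1)

/-- The word space `1_w M` of an `R(α)`-module, as a `ℂ`-subspace. -/
noncomputable def wordSpace {n d : ℕ} (α : Fin n → ℕ) (w : Word n d) (M : Type*)
    [AddCommGroup M] [Module ℂ M] [Module (KLR n d α) M] : Submodule ℂ M :=
  Submodule.span ℂ (Set.range fun m : M => Ew α w • m)

/-!
On `1_w M` the dots `y_j` and crossings `s_r` of a window of equal letters satisfy the nil-Hecke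
relations `s_r y_{r+1} = y_r s_r - 1` and `s_r y_t = y_t s_r` for `t ≥ r + 2`. Let `A_k ⊆ 1_w M`
be the common kernel of `s_0, …, s_{k-2}`. Then `(g_0, …, g_k) ↦ ∑ y_k^j g_j` embeds
`A_{k+1}^{k+1}` into `A_k`: applying `s_{k-1}, s_{k-2}, …` to a relation turns `y_k^j` into
complete homogeneous polynomials of ever lower degree in ever more dots, until only the top
coefficient survives. Hence `m! · dim A_m ≤ dim 1_w M`. Finally `A_m ≠ 0`: every window crossing
lowers the degree by `2`, so a nonzero vector of `1_w M` of lowest degree lies in `A_m`.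
-/

section CompleteHomogeneous

variable {R : Type*} [Ring R]

/-- The noncommutative complete homogeneous polynomial `h_i(a₁, …, a_k) = ∑ a₁^c₁ ⋯ a_k^c_k`
(over `c₁ + ⋯ + c_k = i`), through `h_{i+1}(a :: L) = h_{i+1}(L) + a h_i(a :: L)`. -/
def completeHomogeneous : List R → ℕ → R
  | _, 0 => 1
  | [], _ + 1 => 0
  | a :: L, i + 1 => completeHomogeneous L (i + 1) + a * completeHomogeneous (a :: L) i

@[simp]
theorem completeHomogeneous_zero (L : List R) : completeHomogeneous L 0 = 1 := by
  cases L <;> simp [completeHomogeneous]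

theorem completeHomogeneous_cons_succ (a : R) (L : List R) (i : ℕ) :
    completeHomogeneous (a :: L) (i + 1) =
      completeHomogeneous L (i + 1) + a * completeHomogeneous (a :: L) i := by
  rw [completeHomogeneous]

theorem completeHomogeneous_singleton (a : R) (i : ℕ) : completeHomogeneous [a] i = a ^ i := by
  induction i with
  | zero => simp
  | succ i ih => rw [completeHomogeneous_cons_succ, ih, pow_succ']; simp [completeHomogeneous]

theorem Commute.completeHomogeneous_right {s : R} {L : List R} (hL : ∀ c ∈ L, Commute s c)
    (i : ℕ) : Commute s (completeHomogeneous L i) := by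
  induction L generalizing i with
  | nil => cases i <;> simp [completeHomogeneous]
  | cons a L ihL =>
    induction i with
    | zero => simp
    | succ i ih =>
      rw [completeHomogeneous_cons_succ]
      have ha := hL a List.mem_cons_self
      exact (ihL (fun c hc => hL c (List.mem_cons_of_mem a hc)) _).add_right (ha.mul_right ih)

end CompleteHomogeneous

section NilHecke

variable {K V : Type*} [Semiring K] [AddCommGroup V] [Module K V]

theorem apply_completeHomogeneous_cons_succ {s a b : Module.End K V}
    {L : List (Module.End K V)} (hab : s * b = a * s - 1) (hL : ∀ c ∈ L, Commute s c) {g : V}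
    (hg : s g = 0) (i : ℕ) :
    s (completeHomogeneous (b :: L) (i + 1) g) = -completeHomogeneous (a :: b :: L) i g := by
  have hLg (j : ℕ) : s (completeHomogeneous L j g) = 0 := by
    rw [← Module.End.mul_apply, (Commute.completeHomogeneous_right hL j).eq, Module.End.mul_apply,
      hg, map_zero]
  have hb (v : V) : s (b v) = a (s v) - v := by
    rw [← Module.End.mul_apply, hab]; rfl
  induction i with
  | zero => simp [completeHomogeneous_cons_succ, hLg, hb, hg]
  | succ i ih =>
    rw [completeHomogeneous_cons_succ, LinearMap.add_apply, map_add, hLg, Module.End.mul_apply,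
      hb, ih, completeHomogeneous_cons_succ a]
    simp only [map_neg, LinearMap.add_apply, Module.End.mul_apply]
    abel

theorem sum_completeHomogeneous_cons_eq_zero {s a b : Module.End K V}
    {L : List (Module.End K V)} (hab : s * b = a * s - 1) (hL : ∀ c ∈ L, Commute s c)
    {g : ℕ → V} (hg : ∀ j, s (g j) = 0)
    {n : ℕ} (h : ∑ j ∈ Finset.range (n + 1), completeHomogeneous (b :: L) j (g j) = 0) :
    ∑ j ∈ Finset.range n, completeHomogeneous (a :: b :: L) j (g (j + 1)) = 0 := by
  have hs := congrArg s h
  rw [map_sum, Finset.sum_range_succ'] at hs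
  simpa [apply_completeHomogeneous_cons_succ hab hL (hg _), hg] using hs

end NilHecke

structure NilHeckeRel {R : Type*} [Ring R] (y s : ℕ → R) (q : ℕ) : Prop where
  cross_dot_succ : ∀ r, r + 1 < q → s r * y (r + 1) = y r * s r - 1
  cross_dot_far : ∀ r t, r + 2 ≤ t → t < q → Commute (s r) (y t)

def dotList {R : Type*} (y : ℕ → R) (r n : ℕ) : List R := (List.range' r n).map y

theorem dotList_succ {R : Type*} (y : ℕ → R) (r n : ℕ) :
    dotList y r (n + 1) = y r :: dotList y (r + 1) n :=
  rfl

section CrossingKernel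

variable {K V : Type*} [Semiring K] [AddCommGroup V] [Module K V]

def crossingKernel (s : ℕ → Module.End K V) (k : ℕ) : Submodule K V :=
  ⨅ (r : ℕ) (_ : r + 1 < k), LinearMap.ker (s r)

variable {y s : ℕ → Module.End K V} {q : ℕ}

theorem mem_crossingKernel {k : ℕ} {v : V} :
    v ∈ crossingKernel s k ↔ ∀ r, r + 1 < k → s r v = 0 := by
  simp [crossingKernel]

/-- What remains of `∑ y_k^j g_j = 0` after applying `s_{k-1}, …, s_{k-a}`. -/
theorem NilHeckeRel.sum_completeHomogeneous_dotList_eq_zero (hrel : NilHeckeRel y s q) {k : ℕ}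
    (hk : k < q) {g : ℕ → V} (hg : ∀ j, g j ∈ crossingKernel s (k + 1)) {a : ℕ} (ha : a ≤ k)
    {t : ℕ} (h : ∑ j ∈ Finset.range (t + a + 1), (y k ^ j) (g j) = 0) :
    ∑ j ∈ Finset.range (t + 1),
      completeHomogeneous (dotList y (k - a) (a + 1)) j (g (j + a)) = 0 := by
  induction a generalizing t with
  | zero => simpa [dotList, completeHomogeneous_singleton] using h
  | succ a ih =>
    have hprev := ih (by omega) (t := t + 1) (by rwa [add_right_comm t 1 a])
    rw [show k - a = k - (a + 1) + 1 by omega] at hprev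
    have hL : ∀ c ∈ dotList y (k - (a + 1) + 2) a, Commute (s (k - (a + 1))) c := by
      simp only [dotList, List.mem_map, List.mem_range'_1]
      rintro _ ⟨t', ht', rfl⟩
      exact hrel.cross_dot_far _ _ (by omega) (by omega)
    have hsum := sum_completeHomogeneous_cons_eq_zero (hrel.cross_dot_succ _ (by omega)) hL
      (fun j => mem_crossingKernel.mp (hg (j + a)) _ (by omega)) hprev
    rw [dotList_succ, dotList_succ]
    simpa [add_right_comm _ 1 a, add_assoc] using hsum

theorem NilHeckeRel.eq_zero_of_sum_pow_eq_zero (hrel : NilHeckeRel y s q) {k : ℕ} (hk : k < q)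
    {g : ℕ → V} (hg : ∀ j, g j ∈ crossingKernel s (k + 1)) {n : ℕ} (hn : n ≤ k)
    (h : ∑ j ∈ Finset.range (n + 1), (y k ^ j) (g j) = 0) : ∀ j ≤ n, g j = 0 := by
  have htop (n : ℕ) (hn : n ≤ k) (h : ∑ j ∈ Finset.range (n + 1), (y k ^ j) (g j) = 0) :
      g n = 0 := by
    simpa using hrel.sum_completeHomogeneous_dotList_eq_zero hk hg hn (t := 0) (by simpa using h)
  induction n with
  | zero => simpa using htop 0 hn h
  | succ n ih =>
    have hn1 := htop (n + 1) hn h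
    rw [Finset.sum_range_succ, hn1, map_zero, add_zero] at h
    intro j hj
    rcases hj.lt_or_eq with hj | rfl
    exacts [ih (by omega) h j (by omega), hn1]

end CrossingKernel

section Finrank

open Module

variable {K V : Type*} [DivisionRing K] [AddCommGroup V] [Module K V] [FiniteDimensional K V]
  {y s : ℕ → Module.End K V} {q : ℕ}

theorem NilHeckeRel.succ_mul_finrank_crossingKernel_le (hrel : NilHeckeRel y s q) {k : ℕ}
    (hk : k < q) :
    (k + 1) * finrank K (crossingKernel s (k + 1)) ≤ finrank K (crossingKernel s k) := by
  set A := crossingKernel s (k + 1)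
  let Φ : (Fin (k + 1) → A) →ₗ[K] V :=
    ∑ j : Fin (k + 1), (y k ^ (j : ℕ)) ∘ₗ A.subtype ∘ₗ LinearMap.proj j
  have hΦ (G : Fin (k + 1) → A) : Φ G = ∑ j : Fin (k + 1), (y k ^ (j : ℕ)) (G j) := by
    simp [Φ]
  have hrange : LinearMap.range Φ ≤ crossingKernel s k := by
    rintro _ ⟨G, rfl⟩
    rw [hΦ, mem_crossingKernel]
    intro r hr
    rw [map_sum]
    refine Finset.sum_eq_zero fun j _ => ?_
    rw [← Module.End.mul_apply, ((hrel.cross_dot_far r k (by omega) hk).pow_right _).eq,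
      Module.End.mul_apply, mem_crossingKernel.mp (G j).2 r (by omega), map_zero]
  have hinj : Function.Injective Φ := by
    rw [← LinearMap.ker_eq_bot, Submodule.eq_bot_iff]
    intro G hG
    let g : ℕ → V := fun j => if h : j < k + 1 then G ⟨j, h⟩ else 0
    have hg (j : ℕ) : g j ∈ A := by
      unfold g; split_ifs
      exacts [(G _).2, A.zero_mem]
    have hsum : ∑ j ∈ Finset.range (k + 1), (y k ^ j) (g j) = 0 := by
      rw [← Fin.sum_univ_eq_sum_range (fun j => (y k ^ j) (g j)), ← LinearMap.mem_ker.mp hG, hΦ]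
      simp [g, Fin.is_le]
    funext j
    ext
    simpa [g, Fin.is_le] using hrel.eq_zero_of_sum_pow_eq_zero hk hg le_rfl hsum j (by omega)
  calc (k + 1) * finrank K A = finrank K (Fin (k + 1) → A) := by
        rw [finrank_pi_fintype]; simp
    _ = finrank K (LinearMap.range Φ) := (LinearMap.finrank_range_of_inj hinj).symm
    _ ≤ finrank K (crossingKernel s k) := Submodule.finrank_mono hrange

theorem NilHeckeRel.factorial_mul_finrank_crossingKernel_le (hrel : NilHeckeRel y s q) {k : ℕ}
    (hk : k ≤ q) : k.factorial * finrank K (crossingKernel s k) ≤ finrank K V := by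
  induction k with
  | zero => simpa using Submodule.finrank_le _
  | succ k ih =>
    calc (k + 1).factorial * finrank K (crossingKernel s (k + 1))
        = k.factorial * ((k + 1) * finrank K (crossingKernel s (k + 1))) := by
          rw [Nat.factorial_succ]; ring
      _ ≤ k.factorial * finrank K (crossingKernel s k) :=
          Nat.mul_le_mul_left _ (hrel.succ_mul_finrank_crossingKernel_le (by omega))
      _ ≤ finrank K V := ih (by omega)

theorem NilHeckeRel.factorial_le_finrank (hrel : NilHeckeRel y s q)
    (h : crossingKernel s q ≠ ⊥) : q.factorial ≤ finrank K V :=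
  calc q.factorial = q.factorial * 1 := (mul_one _).symm
    _ ≤ q.factorial * finrank K (crossingKernel s q) :=
        Nat.mul_le_mul_left _ (Submodule.one_le_finrank_iff.mpr h)
    _ ≤ finrank K V := hrel.factorial_mul_finrank_crossingKernel_le le_rfl

end Finrank

section Relations

variable {n d : ℕ} (α : Fin n → ℕ)

theorem isIdempotentElem_Ew (w : Word n d) : IsIdempotentElem (Ew α w) := by
  show Ew α w * Ew α w = Ew α w
  simpa [Ew, map_mul] using RingQuot.mkAlgHom_rel ℂ (KLRRel.idem (α := α) w)

theorem commute_Xg_Ew (k : Fin d) (w : Word n d) : Commute (Xg α k) (Ew α w) := by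
  show Xg α k * Ew α w = Ew α w * Xg α k
  simpa [Ew, Xg, map_mul] using RingQuot.mkAlgHom_rel ℂ (KLRRel.xe (α := α) k w)

theorem wswap_eq_self {s : Fin (d - 1)} {w : Word n d} (h : w (posl s) = w (posr s)) :
    wswap s w = w := by
  funext k
  simp only [wswap, Function.comp_apply, Equiv.swap_apply_def]
  split_ifs with h1 h2 <;> simp_all

theorem commute_Tg_Ew {s : Fin (d - 1)} {w : Word n d} (h : w (posl s) = w (posr s)) :
    Commute (Tg α s) (Ew α w) := by
  have hrel := RingQuot.mkAlgHom_rel ℂ (KLRRel.te (α := α) s w)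
  rw [wswap_eq_self h] at hrel
  show Tg α s * Ew α w = Ew α w * Tg α s
  simpa [Ew, Tg, map_mul] using hrel

theorem posl_ne_posr (s : Fin (d - 1)) : posl s ≠ posr s := by
  simp [posl, posr, Fin.ext_iff]

theorem Tg_mul_Xg_posr_mul_Ew {s : Fin (d - 1)} {w : Word n d} (h : w (posl s) = w (posr s)) :
    Tg α s * Xg α (posr s) * Ew α w = (Xg α (posl s) * Tg α s - 1) * Ew α w := by
  have hrel := RingQuot.mkAlgHom_rel ℂ (KLRRel.txk (α := α) s (posr s) w)
  rw [if_neg fun h' => posl_ne_posr s h'.1.symm, if_pos ⟨rfl, h⟩, Equiv.swap_apply_right] at hrel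
  have hdiff : Tg α s * Xg α (posr s) * Ew α w - Xg α (posl s) * Tg α s * Ew α w = -Ew α w := by
    simpa [Ew, Tg, Xg, sub_mul] using hrel
  rw [sub_eq_iff_eq_add.mp hdiff, sub_mul, one_mul]
  abel

theorem Tg_mul_Xg_mul_Ew_of_ne (s : Fin (d - 1)) {k : Fin d} (w : Word n d)
    (hl : k ≠ posl s) (hr : k ≠ posr s) :
    Tg α s * Xg α k * Ew α w = Xg α k * Tg α s * Ew α w := by
  have hrel := RingQuot.mkAlgHom_rel ℂ (KLRRel.txk (α := α) s k w)
  rw [if_neg fun h => hl h.1, if_neg fun h => hr h.1, Equiv.swap_apply_of_ne_of_ne hl hr] at hrel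
  simpa [Ew, Tg, Xg, sub_mul, sub_eq_zero] using hrel

end Relations

section Corner

variable {n d : ℕ} {α : Fin n → ℕ} {w : Word n d} {M : Type*} [AddCommGroup M] [Module ℂ M]
  [Module (KLR n d α) M] [IsScalarTower ℂ (KLR n d α) M]

theorem wordSpace_eq_range :
    wordSpace α w M = LinearMap.range (Algebra.lsmul ℂ ℂ M (Ew α w)) := by
  rw [wordSpace, ← Submodule.span_eq (LinearMap.range _), LinearMap.coe_range]
  rfl

theorem mem_wordSpace_iff {v : M} : v ∈ wordSpace α w M ↔ Ew α w • v = v := by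
  rw [wordSpace_eq_range,
    LinearMap.IsIdempotentElem.mem_range_iff ((isIdempotentElem_Ew α w).map (Algebra.lsmul ℂ ℂ M))]
  rfl

variable (w M) in
/-- The action of the corner algebra `1_w R(α) 1_w` on `1_w M`: `a` acts as `1_w a`. -/
noncomputable def cornerEnd (a : KLR n d α) : Module.End ℂ (wordSpace α w M) :=
  LinearMap.codRestrict _ ((Algebra.lsmul ℂ ℂ M (Ew α w * a)).comp (wordSpace α w M).subtype)
    fun v => by
      rw [LinearMap.comp_apply, Algebra.lsmul_apply, mem_wordSpace_iff, ← mul_smul, ← mul_assoc,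
        isIdempotentElem_Ew α w]

theorem cornerEnd_apply (a : KLR n d α) (v : wordSpace α w M) :
    (cornerEnd w M a v : M) = (Ew α w * a) • (v : M) := rfl

theorem cornerEnd_mul_Ew (a : KLR n d α) : cornerEnd w M (a * Ew α w) = cornerEnd w M a := by
  ext v
  rw [cornerEnd_apply, cornerEnd_apply, ← mul_assoc, mul_smul _ (Ew α w), mem_wordSpace_iff.mp v.2]

theorem cornerEnd_one : cornerEnd w M (1 : KLR n d α) = 1 := by
  ext v
  rw [cornerEnd_apply, mul_one, mem_wordSpace_iff.mp v.2]
  rfl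

theorem cornerEnd_mul (a : KLR n d α) {b : KLR n d α} (hb : Commute b (Ew α w)) :
    cornerEnd w M (a * b) = cornerEnd w M a * cornerEnd w M b := by
  ext v
  rw [Module.End.mul_apply, cornerEnd_apply, cornerEnd_apply, cornerEnd_apply, ← mul_smul,
    ← hb.eq, ← mul_assoc (Ew α w * a), mul_smul _ (Ew α w), mem_wordSpace_iff.mp v.2, mul_assoc]

theorem cornerEnd_sub (a b : KLR n d α) :
    cornerEnd w M (a - b) = cornerEnd w M a - cornerEnd w M b := by
  ext v
  simp [cornerEnd_apply, mul_sub, sub_smul]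

end Corner

section Window

variable {n d : ℕ} (α : Fin n → ℕ) (w : Word n d) (M : Type*) [AddCommGroup M] [Module ℂ M]
  [Module (KLR n d α) M] [IsScalarTower ℂ (KLR n d α) M]

noncomputable def windowDot (p j : ℕ) : Module.End ℂ (wordSpace α w M) :=
  if h : p + j < d then cornerEnd w M (Xg α ⟨p + j, h⟩) else 0

noncomputable def windowCross (p r : ℕ) : Module.End ℂ (wordSpace α w M) :=
  if h : p + r < d - 1 then cornerEnd w M (Tg α ⟨p + r, h⟩) else 0

variable {α w M} {p m : ℕ} {i₀ : Fin n}

theorem window_label_eq (hcons : ∀ k : Fin d, p ≤ k.1 → k.1 < p + m → w k = i₀) {r : ℕ}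
    (hr : r + 1 < m) (h : p + r < d - 1) :
    w (posl (⟨p + r, h⟩ : Fin (d - 1))) = w (posr ⟨p + r, h⟩) := by
  rw [hcons _ (by simp [posl]) (by simp [posl]; omega),
    hcons _ (by simp [posr]; omega) (by simp [posr]; omega)]

theorem nilHeckeRel_window (hpm : p + m ≤ d)
    (hcons : ∀ k : Fin d, p ≤ k.1 → k.1 < p + m → w k = i₀) :
    NilHeckeRel (windowDot α w M p) (windowCross α w M p) m where
  cross_dot_succ r hr := by
    have hs : p + r < d - 1 := by omega
    have hlab := window_label_eq hcons hr hs
    have key := congrArg (cornerEnd w M) (Tg_mul_Xg_posr_mul_Ew α hlab)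
    rw [cornerEnd_mul_Ew, cornerEnd_mul_Ew, cornerEnd_sub, cornerEnd_one] at key
    rw [windowCross, windowDot, windowDot, dif_pos hs, dif_pos (by omega), dif_pos (by omega),
      ← cornerEnd_mul _ (commute_Xg_Ew α _ w), ← cornerEnd_mul _ (commute_Tg_Ew α hlab)]
    exact key
  cross_dot_far r t hrt ht := by
    have hs : p + r < d - 1 := by omega
    have ht : p + t < d := by omega
    have key := congrArg (cornerEnd w M) (Tg_mul_Xg_mul_Ew_of_ne α ⟨p + r, hs⟩ (k := ⟨p + t, ht⟩)
      w (by simp [posl, Fin.ext_iff]; omega) (by simp [posr, Fin.ext_iff]; omega))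
    rw [cornerEnd_mul_Ew, cornerEnd_mul_Ew, cornerEnd_mul _ (commute_Xg_Ew α _ w),
      cornerEnd_mul _ (commute_Tg_Ew α (window_label_eq hcons (by omega) hs))] at key
    rw [Commute, SemiconjBy, windowCross, windowDot, dif_pos hs, dif_pos ht]
    exact key

end Window

theorem Submodule.exists_min_inf_ne_bot {ι K M : Type*} [LinearOrder ι]
    [DivisionRing K] [AddCommGroup M] [Module K M] [FiniteDimensional K M]
    {piece : ι → Submodule K M}
    (hpiece : iSupIndep piece) {W : Submodule K M} (hW : W ≤ ⨆ i, W ⊓ piece i) (hW0 : W ≠ ⊥) :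
    ∃ i, W ⊓ piece i ≠ ⊥ ∧ ∀ j < i, W ⊓ piece j = ⊥ := by
  set S := {i | W ⊓ piece i ≠ ⊥}
  have hfin : S.Finite := Submodule.finite_ne_bot_of_iSupIndep (hpiece.mono fun _ => inf_le_right)
  have hne : S.Nonempty := by
    by_contra hS
    refine hW0 (eq_bot_iff.mpr (hW.trans (iSup_le fun i => ?_)))
    by_contra hi
    exact hS ⟨i, fun h => hi h.le⟩
  obtain ⟨i, hi, hmin⟩ := Set.exists_min_image S id hfin hne
  exact ⟨i, hi, fun j hj => by_contra fun h => (hmin j h).not_gt hj⟩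

section Grading

variable {n d : ℕ} {α : Fin n → ℕ} {w : Word n d} {M : Type*} [AddCommGroup M] [Module ℂ M]
  [Module (KLR n d α) M] [IsScalarTower ℂ (KLR n d α) M]

theorem wordSpace_le_iSup_inf_piece (gr : KLRGrading n d α M) :
    wordSpace α w M ≤ ⨆ i, wordSpace α w M ⊓ gr.piece i := by
  set f := Algebra.lsmul ℂ ℂ M (Ew α w)
  calc wordSpace α w M = (⨆ i, gr.piece i).map f := by
        rw [gr.internal.submodule_iSup_eq_top, ← LinearMap.range_eq_map, wordSpace_eq_range]
    _ = ⨆ i, (gr.piece i).map f := Submodule.map_iSup _ _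
    _ ≤ ⨆ i, wordSpace α w M ⊓ gr.piece i := iSup_mono fun i =>
        le_inf (wordSpace_eq_range (α := α) (w := w) (M := M) ▸ LinearMap.map_le_range)
          (Submodule.map_le_iff_le_comap.mpr fun x hx => gr.e_stable w i x hx)

theorem crossingKernel_windowCross_ne_bot [FiniteDimensional ℂ M] (gr : KLRGrading n d α M)
    {p m : ℕ} {i₀ : Fin n} (hcons : ∀ k : Fin d, p ≤ k.1 → k.1 < p + m → w k = i₀)
    (hV : wordSpace α w M ≠ ⊥) : crossingKernel (windowCross α w M p) m ≠ ⊥ := by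
  obtain ⟨i, hi, hlow⟩ := Submodule.exists_min_inf_ne_bot
    gr.internal.submodule_iSupIndep (wordSpace_le_iSup_inf_piece gr) hV
  obtain ⟨u, hu, hu0⟩ := (Submodule.ne_bot_iff _).mp hi
  refine (Submodule.ne_bot_iff _).mpr
    ⟨⟨u, hu.1⟩, mem_crossingKernel.mpr fun r hr => ?_, by simpa using hu0⟩
  -- a window crossing lowers the degree by `a_{i₀ i₀} = 2`, so it kills a lowest-degree vector
  rw [windowCross]
  split_ifs with hs
  · have hlab := window_label_eq hcons hr hs
    have hmem : (cornerEnd w M (Tg α ⟨p + r, hs⟩) ⟨u, hu.1⟩ : M) ∈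
        wordSpace α w M ⊓ gr.piece (i - 2) := by
      refine ⟨Submodule.coe_mem _, ?_⟩
      have := gr.t_shift ⟨p + r, hs⟩ w i u hu.2
      rwa [hlab, cartanA, if_pos rfl, (commute_Tg_Ew α hlab).eq] at this
    rw [hlow (i - 2) (by omega), Submodule.mem_bot] at hmem
    exact Subtype.ext hmem
  · rfl

end Grading

theorem wordspace_dim_ge_factorial_general (n d : ℕ) (α : Fin n → ℕ)
    (M : Type) [AddCommGroup M] [Module ℂ M] [Module (KLR n d α) M]
    [IsScalarTower ℂ (KLR n d α) M]
    (hgr : Nonempty (KLRGrading n d α M)) (hfd : FiniteDimensional ℂ M)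
    (w : Word n d)
    (p m : ℕ) (hpm : p + m ≤ d)
    (i₀ : Fin n) (hcons : ∀ k : Fin d, p ≤ k.1 → k.1 < p + m → w k = i₀)
    (hpos : 0 < Module.finrank ℂ (wordSpace α w M)) :
    Nat.factorial m ≤ Module.finrank ℂ (wordSpace α w M) := by
  obtain ⟨gr⟩ := hgr
  exact (nilHeckeRel_window hpm hcons).factorial_le_finrank
    (crossingKernel_windowCross_ne_bot gr hcons (Submodule.one_le_finrank_iff.mp hpos))

/-- Let `M` be a finite dimensional graded module over the KLR algebra `R(α)`
of type `A_n`, and suppose the word `w ∈ I^α` contains `m` consecutive equal entries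
(positions `p, p+1, …, p+m−1`).  If `dim 1_w M > 0` then `dim 1_w M ≥ m!`. -/
theorem wordspace_dim_ge_factorial (n d : ℕ) (α : Fin n → ℕ)
    (M : Type) [AddCommGroup M] [Module ℂ M] [Module (KLR n d α) M]
    [IsScalarTower ℂ (KLR n d α) M]
    (hgr : Nonempty (KLRGrading n d α M)) (hfd : FiniteDimensional ℂ M)
    (w : Word n d) (hw : wContent w = α)
    (p m : ℕ) (hpm : p + m ≤ d)
    (i₀ : Fin n) (hcons : ∀ k : Fin d, p ≤ k.1 → k.1 < p + m → w k = i₀)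
    (hpos : 0 < Module.finrank ℂ (wordSpace α w M)) :
    Nat.factorial m ≤ Module.finrank ℂ (wordSpace α w M) :=
  wordspace_dim_ge_factorial_general n d α M hgr hfd w p m hpm i₀ hcons hpos
end

section
/- Let M be an irreducible R(β_1) ⊗ ⋯ ⊗ R(β_k)-module and suppose a word i appears in ch(Ind M) with coefficient m. If i occurs with coefficient m in the character of every nonzero submodule of Ind M, then the socle of Ind M is irreducible and occurs with multiplicity one in a composition series of Ind M; if moreover i occurs in the character of the head of Ind M, then Ind M is itself irreducible. -/
open scoped BigOperators

set_option maxSynthPendingDepth 3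

/-- The word space `1_w N` of a submodule, as a `ℂ`-subspace of the ambient module. -/
noncomputable def subWordSpace {n d : ℕ} (α : Fin n → ℕ) (w : Word n d) {X : Type*}
    [AddCommGroup X] [Module ℂ X] [Module (KLR n d α) X]
    (N : Submodule (KLR n d α) X) : Submodule ℂ X :=
  Submodule.span ℂ {x : X | ∃ v ∈ N, x = Ew α w • v}

/-- (Here `X` plays the role of the induced module `Ind M` of an irreducible
`R(β₁) ⊗ ⋯ ⊗ R(β_k)`-module `M`; the statement is formalized for an arbitrary finite
dimensional `R(α)`-module `X`, which the argument of the paper covers.)  Suppose the word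
`w` appears in `ch X` with coefficient `m > 0`, and that `w` occurs with coefficient `m` in
the character of every nonzero submodule of `X`.  Then the socle of `X` is irreducible and
occurs with multiplicity one in any composition series of `X`; if moreover `w` occurs in the
character of the head of `X`, then `X` is itself irreducible. -/
theorem socle_simple_of_word_multiplicity (n d : ℕ) (α : Fin n → ℕ)
    (X : Type) [AddCommGroup X] [Module ℂ X] [Module (KLR n d α) X]
    [IsScalarTower ℂ (KLR n d α) X] (hfd : FiniteDimensional ℂ X)
    (w : Word n d) (hw : wContent w = α) (m : ℕ) (hm : 0 < m)
    (hmult : Module.finrank ℂ (wordSpace α w X) = m)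
    (hsub : ∀ N : Submodule (KLR n d α) X, N ≠ ⊥ →
      Module.finrank ℂ (subWordSpace α w N) = m) :
    IsSimpleModule (KLR n d α)
      (↥(sSup {N : Submodule (KLR n d α) X | IsAtom N})) ∧
    (∀ (len : ℕ) (cs : ℕ → Submodule (KLR n d α) X),
      cs 0 = ⊥ → cs len = ⊤ →
      (∀ j < len, cs j < cs (j + 1) ∧ ∀ N, ¬(cs j < N ∧ N < cs (j + 1))) →
      ∃! j, j < len ∧
        Nonempty ((↥(cs (j + 1)) ⧸ Submodule.comap (cs (j + 1)).subtype (cs j))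
          ≃ₗ[KLR n d α] ↥(sSup {N : Submodule (KLR n d α) X | IsAtom N}))) ∧
    ((∃ q : X ⧸ sInf {N : Submodule (KLR n d α) X | IsCoatom N}, Ew α w • q ≠ 0) →
      IsSimpleModule (KLR n d α) X) := by
  haveI := hfd
  have hidem : Ew α w * Ew α w = Ew α w := by
    have h := RingQuot.mkAlgHom_rel ℂ (KLRRel.idem (n := n) (d := d) (α := α) w)
    rw [map_mul] at h
    exact h
  have hmemW : ∀ z : X, Ew α w • z ∈ wordSpace α w X := by
    intro z
    unfold wordSpace
    exact Submodule.subset_span ⟨z, rfl⟩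
  have hWne : wordSpace α w X ≠ ⊥ := by
    intro h
    rw [h, finrank_bot] at hmult
    omega
  have hWsub : ∀ N : Submodule (KLR n d α) X, N ≠ ⊥ →
      (wordSpace α w X : Set X) ⊆ N := by
    intro N hN
    have h1 : subWordSpace α w N ≤ wordSpace α w X := by
      apply Submodule.span_le.mpr
      rintro x ⟨v, hv, rfl⟩
      exact hmemW v
    have h2 : subWordSpace α w N = wordSpace α w X :=
      Submodule.eq_of_le_of_finrank_le h1 (by rw [hmult, hsub N hN])
    have h3 : subWordSpace α w N ≤ N.restrictScalars ℂ := by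
      apply Submodule.span_le.mpr
      rintro x ⟨v, hv, rfl⟩
      exact N.smul_mem _ hv
    intro x hx
    exact h3 (h2.symm ▸ hx)
  set S₀ : Submodule (KLR n d α) X :=
    Submodule.span (KLR n d α) (wordSpace α w X : Set X) with hS₀def
  have hWS : (wordSpace α w X : Set X) ⊆ S₀ := Submodule.subset_span
  obtain ⟨x₀, hx₀W, hx₀⟩ := (Submodule.ne_bot_iff _).mp hWne
  have hS₀ne : S₀ ≠ ⊥ := by
    intro h
    have hx₀S : x₀ ∈ S₀ := hWS hx₀W
    rw [h] at hx₀S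
    exact hx₀ ((Submodule.mem_bot _).mp hx₀S)
  have hmin : ∀ N : Submodule (KLR n d α) X, N ≠ ⊥ → S₀ ≤ N := fun N hN =>
    Submodule.span_le.mpr (hWsub N hN)
  have hAtom : IsAtom S₀ := by
    constructor
    · exact hS₀ne
    · intro B hB
      by_contra hBne
      exact absurd (hmin B hBne) hB.not_ge
  have hUniq : ∀ A : Submodule (KLR n d α) X, IsAtom A → A = S₀ := by
    intro A hA
    rcases lt_or_eq_of_le (hmin A hA.1) with h | h
    · exact absurd (hA.2 _ h) hS₀ne
    · exact h.symm
  have hSup : sSup {N : Submodule (KLR n d α) X | IsAtom N} = S₀ :=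
    le_antisymm (sSup_le fun A hA => le_of_eq (hUniq A hA)) (le_sSup hAtom)
  have hex : ∃ x : X, Ew α w • x ≠ 0 := by
    by_contra h
    push_neg at h
    apply hWne
    refine le_bot_iff.mp ?_
    unfold wordSpace
    refine Submodule.span_le.mpr ?_
    rintro _ ⟨x, rfl⟩
    simp [h x]
  obtain ⟨x, hx⟩ := hex
  have hvW : Ew α w • x ∈ wordSpace α w X := hmemW x
  have hvv : Ew α w • (Ew α w • x) = Ew α w • x := by
    rw [← mul_smul, hidem]
  refine ⟨?_, ?_, ?_⟩
  · rw [hSup]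
    exact isSimpleModule_iff_isAtom.mpr hAtom
  · intro len cs h0 hl hch
    rw [hSup]
    have hlen0 : 0 < len := by
      rcases Nat.eq_zero_or_pos len with h | h
      · exfalso
        rw [h, h0] at hl
        have hmemtop : x₀ ∈ (⊥ : Submodule (KLR n d α) X) := by
          rw [hl]; exact Submodule.mem_top
        exact hx₀ ((Submodule.mem_bot _).mp hmemtop)
      · exact h
    have hcs1 : cs 1 = S₀ := by
      apply hUniq
      constructor
      · intro h
        have hlt := (hch 0 hlen0).1
        rw [h0, h] at hlt
        exact lt_irrefl _ hlt
      · intro B hB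
        by_contra hBne
        exact (hch 0 hlen0).2 B ⟨h0 ▸ Ne.bot_lt hBne, hB⟩
    refine ⟨0, ⟨⟨hlen0, ⟨?_⟩⟩, ?_⟩⟩
    · exact (Submodule.quotEquivOfEqBot _ (by
        rw [h0, Submodule.comap_bot, Submodule.ker_subtype])).trans
        (LinearEquiv.ofEq _ _ hcs1)
    · rintro j ⟨hjlt, ⟨f⟩⟩
      by_contra hj0
      have hj1 : 1 ≤ j := Nat.one_le_iff_ne_zero.mpr hj0
      have hle : ∀ i, 1 ≤ i → i ≤ len → cs 1 ≤ cs i := by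
        intro i
        induction i with
        | zero => intro h _; exact absurd h (by omega)
        | succ k ih =>
          intro h1 hk
          rcases Nat.lt_or_ge 1 (k + 1) with h | h
          · have hk1 : 1 ≤ k := by omega
            exact (ih hk1 (by omega)).trans (hch k (by omega)).1.le
          · have hkk : k + 1 = 1 := by omega
            rw [hkk]
      have hcsjne : cs j ≠ ⊥ := by
        intro h
        have h1 : cs 1 = ⊥ := le_bot_iff.mp (h ▸ hle j hj1 hjlt.le)
        rw [hcs1] at h1
        exact hS₀ne h1
      set v := Ew α w • x with hv
      have hvS : v ∈ S₀ := hWS hvW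
      have hp : Ew α w • (⟨v, hvS⟩ : S₀) = ⟨v, hvS⟩ := Subtype.ext (by simpa using hvv)
      have hpne : (⟨v, hvS⟩ : S₀) ≠ 0 := by
        intro h
        exact hx (by simpa using congrArg Subtype.val h)
      set q := f.symm ⟨v, hvS⟩ with hqdef
      have hq0 : q ≠ 0 := by
        rw [hqdef]
        intro h
        apply hpne
        have h2 := congrArg f h
        simpa using h2
      have hqq : Ew α w • q = q := by
        rw [hqdef, ← map_smul, hp]
      obtain ⟨y, hy⟩ := Submodule.Quotient.mk_surjective _ q
      have hmk : Submodule.Quotient.mk (Ew α w • y) = q := by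
        rw [Submodule.Quotient.mk_smul, hy, hqq]
      have hnotin : (↑(Ew α w • y) : X) ∉ cs j := by
        intro hin
        apply hq0
        rw [← hmk]
        exact (Submodule.Quotient.mk_eq_zero _).mpr (Submodule.mem_comap.mpr hin)
      have hcoe : (↑(Ew α w • y) : X) = Ew α w • (↑y : X) := rfl
      apply hnotin
      rw [hcoe]
      exact hWsub (cs j) hcsjne (hmemW (↑y : X))
  · rintro ⟨q, hq⟩
    obtain ⟨z, rfl⟩ := Submodule.Quotient.mk_surjective _ q
    have hz : Ew α w • z ∉ sInf {N : Submodule (KLR n d α) X | IsCoatom N} := by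
      intro hin
      apply hq
      rw [← Submodule.Quotient.mk_smul]
      exact (Submodule.Quotient.mk_eq_zero _).mpr hin
    have hco : ∃ C : Submodule (KLR n d α) X, IsCoatom C ∧ Ew α w • z ∉ C := by
      by_contra h
      push_neg at h
      exact hz (Submodule.mem_sInf.mpr fun C hC => h C hC)
    obtain ⟨C, hC, hzC⟩ := hco
    have hCbot : C = ⊥ := by
      by_contra hCne
      exact hzC (hWsub C hCne (hmemW z))
    subst hCbot
    exact { exists_pair_ne := ⟨⊥, ⊤, hC.1⟩
            eq_bot_or_eq_top := fun N => (eq_or_ne N ⊥).imp id fun h => hC.2 N (Ne.bot_lt h) }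
end
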